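/- Let σ and τ be permutations of {1, …, 2n−2} such that σ and τ select the same multiset of variable positions in the structured matrix B_n(u) (i.e., they generate the same monomial in the Laplace expansion of det B_n(u)). Then sgn(σ) = sgn(τ), where B_n(u) is the (2n−2)×(2n−2) matrix with columns indexed in pairs (2i−1, 2i) for i = 1,…,n−1 such that B_n(u)_{j, 2i−1} = u_{i,j} and B_n(u)_{j+1, 2i} = u_{i,j} for j = 1,…,2n−3, all other entries zero, and the u_{i,j} are distinct indeterminates. -/

import Mathlib

/-!
In column `k` the permutation `σ` picks the variable `u_{k/2, σ k - k % 2}`. If `σ` and `τ` give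
the same monomial, the multisets of picked variables agree, so some permutation `t` of the columns,
preserving each pair `{2i, 2i+1}`, satisfies `τ (t k) - t k % 2 = σ k - k % 2`. Then
`τ = c * σ * t⁻¹`, where `c` and `t` both move every point by at most one and move equally many
points up. A permutation moving every point by at most one is a product of disjoint adjacent
transpositions, one per point moved up, so `sign c = sign t` and hence `sign τ = sign σ`.
-/

open Finset MvPolynomial

/-- The `(2n-2) × (2n-2)` structured matrix `B_n(u)` of indeterminates: the
variable `u_{i,j}` appears at positions `(j, 2i)` and `(j+1, 2i+1)`
(0-indexed), all other entries are zero. -/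
noncomputable def Bmat (n : ℕ) :
    Matrix (Fin (2 * n - 2)) (Fin (2 * n - 2))
      (MvPolynomial (Fin (n - 1) × Fin (2 * n - 3)) ℤ) :=
  Matrix.of fun p q =>
    if q.val % 2 = 0 then
      if hp : p.val < 2 * n - 3 then
        MvPolynomial.X (⟨q.val / 2, by have := q.isLt; omega⟩, ⟨p.val, hp⟩)
      else 0
    else
      if hp : 0 < p.val then
        MvPolynomial.X (⟨q.val / 2, by have := q.isLt; omega⟩,
          ⟨p.val - 1, by have := p.isLt; omega⟩)
      else 0

namespace Equiv.Perm

def MovesAtMostOne {m : ℕ} (c : Perm (Fin m)) : Prop :=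
  ∀ x, (c x : ℕ) ≤ x + 1 ∧ (x : ℕ) ≤ c x + 1

namespace MovesAtMostOne

variable {m : ℕ} {c : Perm (Fin m)}

theorem apply_apply_of_apply_eq_succ (hc : c.MovesAtMostOne) :
    ∀ x : Fin m, (c x : ℕ) = x + 1 → c (c x) = x := by
  intro x
  -- descending induction: if `c (c x) = c x + 1`, the claim at `c x` gives `c (c (c x)) = c x`
  induction x using WellFoundedGT.induction with
  | _ x ih =>
  intro hx
  have hne : c (c x) ≠ c x := fun e => by rw [c.injective e] at hx; omega
  have := hc (c x)
  have := Fin.val_ne_of_ne hne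
  obtain h | h : (c (c x) : ℕ) = x ∨ (c (c x) : ℕ) = c x + 1 := by omega
  · exact Fin.ext h
  · exact c.injective (ih (c x) (Fin.lt_def.mpr (by omega)) h)

theorem eq_one_of_forall_apply_ne_succ (hc : c.MovesAtMostOne)
    (hup : ∀ x, (c x : ℕ) ≠ x + 1) : c = 1 := by
  ext x : 1
  rw [one_apply]
  induction x using WellFoundedLT.induction with
  | _ x ih =>
  by_contra hne
  have := hc x
  have := hup x
  have := Fin.val_ne_of_ne hne
  exact hne (c.injective (ih (c x) (Fin.lt_def.mpr (by omega))))

theorem sign_eq_neg_one_pow (hc : c.MovesAtMostOne) :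
    sign c = (-1) ^ #{x | (c x : ℕ) = x + 1} := by
  induction h : #{x | (c x : ℕ) = x + 1} generalizing c with
  | zero =>
    rw [hc.eq_one_of_forall_apply_ne_succ fun x =>
      filter_eq_empty_iff.mp (card_eq_zero.mp h) (mem_univ x), sign_one, pow_zero]
  | succ N ih =>
    obtain ⟨x, hx⟩ : ∃ x, (c x : ℕ) = x + 1 := by
      obtain ⟨x, hx⟩ := card_pos.mp (h ▸ N.succ_pos : 0 < #{x | (c x : ℕ) = x + 1})
      exact ⟨x, (mem_filter.mp hx).2⟩
    have hcc := hc.apply_apply_of_apply_eq_succ x hx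
    have hxy : x ≠ c x := fun e => by rw [← e] at hx; omega
    set c' := swap x (c x) * c with hc'
    have hc'_of_ne : ∀ z, z ≠ x → z ≠ c x → c' z = c z := fun z hzx hzy =>
      swap_apply_of_ne_of_ne (fun e => hzy (c.injective (e.trans hcc.symm)))
        (fun e => hzx (c.injective e))
    have hc'x : c' x = x := by simp [hc']
    have hc'cx : c' (c x) = c x := by simp [hc', hcc]
    have hup : #{z | (c' z : ℕ) = z + 1} = N := by
      suffices ({z | (c' z : ℕ) = z + 1} : Finset _) =
          ({z | (c z : ℕ) = z + 1} : Finset _).erase x by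
        rw [this, card_erase_of_mem (mem_filter.mpr ⟨mem_univ x, hx⟩), h, Nat.add_sub_cancel]
      ext z
      simp only [mem_filter, mem_erase, mem_univ, true_and]
      by_cases hzx : z = x
      · subst hzx; simp [hc'x]
      by_cases hzy : z = c x
      · subst hzy; rw [hc'cx, hcc]; omega
      rw [hc'_of_ne z hzx hzy]
      tauto
    have hmov : c'.MovesAtMostOne := by
      intro z
      by_cases hzx : z = x
      · subst hzx; rw [hc'x]; omega
      by_cases hzy : z = c x
      · subst hzy; rw [hc'cx]; omega
      rw [hc'_of_ne z hzx hzy]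
      exact hc z
    have hcc' : c = swap x (c x) * c' := by rw [hc', ← mul_assoc, swap_mul_self, one_mul]
    rw [hcc', sign_mul, sign_swap hxy, ih hmov hup, pow_succ, mul_comm]

end MovesAtMostOne

theorem sign_eq_of_apply_add_mod_two_eq {m : ℕ} {σ τ t : Perm (Fin m)}
    (ht : ∀ k, (t k : ℕ) / 2 = k / 2) (h : ∀ k, (τ (t k) : ℕ) + k % 2 = σ k + t k % 2) :
    sign σ = sign τ := by
  set c := τ * t * σ⁻¹
  have hc : ∀ k, (c (σ k) : ℕ) + k % 2 = σ k + t k % 2 := by simpa [c] using h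
  have hc_mov : c.MovesAtMostOne := fun x => by
    have := hc (σ.symm x)
    rw [σ.apply_symm_apply] at this
    omega
  have ht_mov : t.MovesAtMostOne := fun k => by have := ht k; omega
  have hup : #{x | (c x : ℕ) = x + 1} = #{k | (t k : ℕ) = k + 1} := by
    refine card_equiv σ.symm fun x => ?_
    have h₁ := hc (σ.symm x)
    have h₂ := ht (σ.symm x)
    rw [σ.apply_symm_apply] at h₁
    simp only [mem_filter, mem_univ, true_and]
    omega
  have hτ : τ = c * σ * t⁻¹ := by simp [c, mul_assoc]
  rw [hτ, sign_mul, sign_mul, sign_inv, hc_mov.sign_eq_neg_one_pow, hup,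
    ← ht_mov.sign_eq_neg_one_pow, mul_right_comm, Int.units_mul_self, one_mul]

end Equiv.Perm

theorem exists_perm_apply_eq_of_card_fiber_eq {ι α : Type*} [Fintype ι] [DecidableEq α]
    {f g : ι → α} (h : ∀ a, #{k | f k = a} = #{k | g k = a}) :
    ∃ e : Equiv.Perm ι, ∀ k, g (e k) = f k :=
  ⟨Equiv.ofFiberEquiv fun a =>
      Fintype.equivOfCardEq (by simpa only [Fintype.card_subtype] using h a),
    Equiv.ofFiberEquiv_map _⟩

theorem MvPolynomial.card_fiber_eq_of_prod_X_eq {R σ ι : Type*} [CommSemiring R]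
    [NoZeroDivisors R] [Nontrivial R] [Fintype ι] [DecidableEq σ] {f g : ι → σ}
    (h : ∏ k, (X (f k) : MvPolynomial σ R) = ∏ k, X (g k)) (a : σ) :
    #{k | f k = a} = #{k | g k = a} := by
  have degreeOf_prod_X : ∀ f : ι → σ,
      degreeOf a (∏ k, (X (f k) : MvPolynomial σ R)) = #{k | f k = a} := by
    intro f
    rw [degreeOf_prod_eq _ _ fun k _ => X_ne_zero _]
    simp [degreeOf_X, eq_comm]
  rw [← degreeOf_prod_X, ← degreeOf_prod_X, h]

theorem Bmat_eq_X_of_ne_zero {n : ℕ} {p q : Fin (2 * n - 2)} (h : Bmat n p q ≠ 0) :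
    ∃ v : Fin (n - 1) × Fin (2 * n - 3),
      Bmat n p q = X v ∧ (v.1 : ℕ) = q / 2 ∧ (v.2 : ℕ) + q % 2 = p := by
  simp only [Bmat, Matrix.of_apply] at h ⊢
  split_ifs at h ⊢ with hq
  · exact ⟨_, rfl, rfl, by simp [hq]⟩
  · exact absurd rfl h
  · exact ⟨_, rfl, rfl, by simp only; omega⟩
  · exact absurd rfl h

theorem stmt16_general (n : ℕ) (σ τ : Equiv.Perm (Fin (2 * n - 2)))
    (heq : ∏ k, Bmat n (σ k) k = ∏ k, Bmat n (τ k) k)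
    (hne : ∏ k, Bmat n (σ k) k ≠ 0) :
    Equiv.Perm.sign σ = Equiv.Perm.sign τ := by
  have hne' : ∏ k, Bmat n (τ k) k ≠ 0 := heq ▸ hne
  choose vσ hXσ hσ₁ hσ₂ using fun k =>
    Bmat_eq_X_of_ne_zero (prod_ne_zero_iff.mp hne k (mem_univ k))
  choose vτ hXτ hτ₁ hτ₂ using fun k =>
    Bmat_eq_X_of_ne_zero (prod_ne_zero_iff.mp hne' k (mem_univ k))
  obtain ⟨t, ht⟩ := exists_perm_apply_eq_of_card_fiber_eq
    (MvPolynomial.card_fiber_eq_of_prod_X_eq (by simpa only [hXσ, hXτ] using heq))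
  refine Equiv.Perm.sign_eq_of_apply_add_mod_two_eq (t := t) (fun k => ?_) (fun k => ?_)
  · rw [← hτ₁, ← hσ₁, ht]
  · rw [← hτ₂, ← hσ₂, ht]
    omega

/-- if two permutations `σ, τ` of `{1,…,2n-2}` generate the same
(nonzero) monomial in the Laplace expansion of `det B_n(u)`, then they have the
same sign. -/
theorem stmt16 (n : ℕ) (hn : 2 ≤ n) (σ τ : Equiv.Perm (Fin (2 * n - 2)))
    (heq : ∏ k, Bmat n (σ k) k = ∏ k, Bmat n (τ k) k)
    (hne : ∏ k, Bmat n (σ k) k ≠ 0) :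
    Equiv.Perm.sign σ = Equiv.Perm.sign τ :=
  stmt16_general n σ τ heq hne
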